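/- Let f : ℕ → ℚ be defined by f(5) = 56; for every odd integer n ≥ 5, f(n+1) = 4·f(n) + (n−1)²·2^(n−2); and for every odd integer n ≥ 5, f(n+2) = 16·f(n) + 2^n·(6·(C((n+1)/2, 2) + C((n−1)/2, 2)) + (n−1)) − ε_n·2^n − 8·2^((n−3)/2), where ε_n = 1 if n ∈ {5, 7, 9} and ε_n = 0 if n ≥ 11. Then the sequence f(n)/4^n converges, as n → ∞, to 26695/172032; in particular this limit is strictly smaller than 5/32. -/
import Mathlib
set_option maxHeartbeats 1600000

private lemma hpoly (m : ℕ) : ((m:ℚ)^2 + 11*m + 32) * 4^m ≤ 100 * 9^m := by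
  induction m with
  | zero => norm_num
  | succ m ih =>
    have h4 : (0:ℚ) < 4^m := by positivity
    have key : (((m:ℚ)+1)^2 + 11*((m:ℚ)+1) + 32) * 4 ≤ 9 * ((m:ℚ)^2 + 11*m + 32) := by
      nlinarith [sq_nonneg (m:ℚ), Nat.cast_nonneg (α := ℚ) m]
    calc (((m+1:ℕ):ℚ)^2 + 11*((m+1:ℕ):ℚ) + 32) * 4^(m+1)
        = ((((m:ℚ)+1)^2 + 11*((m:ℚ)+1) + 32) * 4) * 4^m := by push_cast; ring
      _ ≤ (9 * ((m:ℚ)^2 + 11*m + 32)) * 4^m := by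
          exact mul_le_mul_of_nonneg_right key (le_of_lt h4)
      _ = 9 * (((m:ℚ)^2 + 11*m + 32) * 4^m) := by ring
      _ ≤ 9 * (100 * 9^m) := by linarith
      _ = 100 * 9^(m+1) := by ring

theorem stmt_8 (f : ℕ → ℚ)
    (h5 : f 5 = 56)
    (hrec1 : ∀ n : ℕ, 5 ≤ n → Odd n →
      f (n + 1) = 4 * f n + ((n : ℚ) - 1) ^ 2 * 2 ^ (n - 2))
    (hrec2 : ∀ n : ℕ, 5 ≤ n → Odd n →
      f (n + 2) = 16 * f n
        + 2 ^ n * (6 * ((Nat.choose ((n + 1) / 2) 2 : ℚ)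
            + (Nat.choose ((n - 1) / 2) 2 : ℚ)) + ((n : ℚ) - 1))
        - (if n = 5 ∨ n = 7 ∨ n = 9 then (1 : ℚ) else 0) * 2 ^ n
        - 8 * 2 ^ ((n - 3) / 2)) :
    Filter.Tendsto (fun n : ℕ => f n / 4 ^ n) Filter.atTop
        (nhds (26695 / 172032 : ℚ)) ∧
      (26695 / 172032 : ℚ) < 5 / 32 := by
  -- base values
  have h7 : f 7 = 1744 := by
    have := hrec2 5 (by norm_num) ⟨2, rfl⟩
    norm_num [h5, Nat.choose] at this; exact this
  have h9 : f 9 = 35424 := by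
    have := hrec2 7 (by norm_num) ⟨3, rfl⟩
    norm_num [h7, Nat.choose] at this; exact this
  have h11 : f 11 = 619456 := by
    have := hrec2 9 (by norm_num) ⟨4, rfl⟩
    norm_num [h9, Nat.choose] at this; exact this
  -- closed form for odd indices ≥ 11
  have key : ∀ m : ℕ, f (2*m+11) =
      26695/43008 * ((2:ℚ)^m)^4 * 16^5
        - (((m:ℚ)+5)^2 + ((m:ℚ)+5) + 2/3) * ((2:ℚ)^m)^2 * 4^5
        + 2/7 * (2:ℚ)^m * 2^5 := by
    intro m
    induction m with
    | zero => rw [show 2*0+11 = 11 from rfl, h11]; norm_num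
    | succ m ih =>
      have h := hrec2 (2*m+11) (by omega) ⟨m+5, by ring⟩
      have e0 : 2*m+11+2 = 2*(m+1)+11 := by ring
      have e1 : (2*m+11+1)/2 = m+6 := by omega
      have e2 : (2*m+11-1)/2 = m+5 := by omega
      have e3 : (2*m+11-3)/2 = m+4 := by omega
      have e4 : ¬(2*m+11 = 5 ∨ 2*m+11 = 7 ∨ 2*m+11 = 9) := by omega
      rw [e0, e1, e2, e3, if_neg e4, ih] at h
      rw [h]
      have p1 : (2:ℚ)^(2*m+11) = ((2:ℚ)^m)^2 * 2^11 := by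
        rw [← pow_mul, ← pow_add]; ring_nf
      have p2 : (2:ℚ)^(m+4) = (2:ℚ)^m * 2^4 := by rw [pow_add]
      have c1 : ((m+6).choose 2 : ℚ) = ((m:ℚ)+6) * ((m:ℚ)+5) / 2 := by
        rw [Nat.cast_choose_two]; push_cast; ring
      have c2 : ((m+5).choose 2 : ℚ) = ((m:ℚ)+5) * ((m:ℚ)+4) / 2 := by
        rw [Nat.cast_choose_two]; push_cast; ring
      rw [p1, p2, c1, c2]
      push_cast
      ring
  -- the two-sided bound
  have bound : ∀ n : ℕ, 11 ≤ n →
      (26695/172032:ℚ) * 4^n - 16 * 3^n ≤ f n ∧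
      f n ≤ (26695/172032:ℚ) * 4^n + 16 * 3^n := by
    intro n hn
    obtain ⟨m, hm⟩ : ∃ m, n = 2*m+11 ∨ n = 2*m+12 := ⟨(n-11)/2, by omega⟩
    have hx1 : (1:ℚ) ≤ (2:ℚ)^m := one_le_pow₀ (by norm_num)
    have hy1 : (1:ℚ) ≤ (3:ℚ)^m := one_le_pow₀ (by norm_num)
    have hxy : (2:ℚ)^m ≤ (3:ℚ)^m := pow_le_pow_left₀ (by norm_num) (by norm_num) m
    have hp : ((m:ℚ)^2 + 11*m + 32) * ((2:ℚ)^m)^2 ≤ 100 * ((3:ℚ)^m)^2 := by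
      have h4 : (4:ℚ)^m = ((2:ℚ)^m)^2 := by
        rw [show (4:ℚ) = 2^2 by norm_num, ← pow_mul, ← pow_mul]; congr 1; ring
      have h9' : (9:ℚ)^m = ((3:ℚ)^m)^2 := by
        rw [show (9:ℚ) = 3^2 by norm_num, ← pow_mul, ← pow_mul]; congr 1; ring
      rw [← h4, ← h9']; exact hpoly m
    have hm0 : (0:ℚ) ≤ (m:ℚ) := Nat.cast_nonneg m
    have q4 : ∀ k : ℕ, (4:ℚ)^(2*m+k) = ((2:ℚ)^m)^4 * 4^k := by
      intro k
      rw [pow_add, show (4:ℚ) = 2^2 by norm_num, ← pow_mul, ← pow_mul, ← pow_mul]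
      congr 2; ring
    have q3 : ∀ k : ℕ, (3:ℚ)^(2*m+k) = ((3:ℚ)^m)^2 * 3^k := by
      intro k
      rw [pow_add, ← pow_mul]
      congr 2; ring
    rcases hm with hm | hm
    · subst hm
      rw [key m, q4 11, q3 11]
      obtain ⟨x, hxdef⟩ : ∃ x, (2:ℚ)^m = x := ⟨_, rfl⟩
      obtain ⟨y, hydef⟩ : ∃ y, (3:ℚ)^m = y := ⟨_, rfl⟩
      rw [hxdef] at hp hx1 hxy ⊢
      rw [hydef] at hp hy1 hxy ⊢
      constructor
      · nlinarith [hp, sq_nonneg x, sq_nonneg y, hx1, hy1,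
          mul_nonneg hm0 (sq_nonneg x), mul_nonneg (mul_nonneg hm0 hm0) (sq_nonneg x)]
      · nlinarith [hp, sq_nonneg x, sq_nonneg y, hx1, hy1, hxy,
          mul_nonneg hm0 (sq_nonneg x), mul_nonneg (mul_nonneg hm0 hm0) (sq_nonneg x),
          mul_le_mul_of_nonneg_left hy1 (le_trans (by norm_num) hy1)]
    · subst hm
      have h := hrec1 (2*m+11) (by omega) ⟨m+5, by ring⟩
      have e0 : 2*m+11+1 = 2*m+12 := by ring
      have e1 : 2*m+11-2 = 2*m+9 := by omega
      rw [e0, e1, key m] at h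
      have p1 : (2:ℚ)^(2*m+9) = ((2:ℚ)^m)^2 * 2^9 := by
        rw [pow_add, ← pow_mul]
        congr 2; ring
      rw [h, p1, q4 12, q3 12]
      obtain ⟨x, hxdef⟩ : ∃ x, (2:ℚ)^m = x := ⟨_, rfl⟩
      obtain ⟨y, hydef⟩ : ∃ y, (3:ℚ)^m = y := ⟨_, rfl⟩
      rw [hxdef] at hp hx1 hxy ⊢
      rw [hydef] at hp hy1 hxy ⊢
      push_cast
      constructor
      · nlinarith [hp, sq_nonneg x, sq_nonneg y, hx1, hy1,
          mul_nonneg hm0 (sq_nonneg x), mul_nonneg (mul_nonneg hm0 hm0) (sq_nonneg x)]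
      · nlinarith [hp, sq_nonneg x, sq_nonneg y, hx1, hy1, hxy,
          mul_nonneg hm0 (sq_nonneg x), mul_nonneg (mul_nonneg hm0 hm0) (sq_nonneg x),
          mul_le_mul_of_nonneg_left hy1 (le_trans (by norm_num) hy1)]
  refine ⟨?_, by norm_num⟩
  have hgeo : Filter.Tendsto (fun n : ℕ => (16:ℚ) * (3/4)^n) Filter.atTop (nhds 0) := by
    have := tendsto_pow_atTop_nhds_zero_of_lt_one
      (show (0:ℚ) ≤ 3/4 by norm_num) (show (3/4:ℚ) < 1 by norm_num)
    simpa using this.const_mul (16:ℚ)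
  have hlow : Filter.Tendsto (fun n : ℕ => (26695/172032:ℚ) - 16 * (3/4)^n)
      Filter.atTop (nhds (26695/172032:ℚ)) := by
    have hc : Filter.Tendsto (fun _ : ℕ => (26695/172032:ℚ)) Filter.atTop
        (nhds (26695/172032:ℚ)) := tendsto_const_nhds
    simpa using hc.sub hgeo
  have hupp : Filter.Tendsto (fun n : ℕ => (26695/172032:ℚ) + 16 * (3/4)^n)
      Filter.atTop (nhds (26695/172032:ℚ)) := by
    have hc : Filter.Tendsto (fun _ : ℕ => (26695/172032:ℚ)) Filter.atTop
        (nhds (26695/172032:ℚ)) := tendsto_const_nhds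
    simpa using hc.add hgeo
  apply tendsto_of_tendsto_of_tendsto_of_le_of_le' hlow hupp
  · filter_upwards [Filter.eventually_ge_atTop 11] with n hn
    have h4 : (0:ℚ) < 4^n := by positivity
    rw [le_div_iff₀ h4]
    have h34 : ((3:ℚ)/4)^n * 4^n = 3^n := by
      rw [div_pow]; field_simp
    have := (bound n hn).1
    nlinarith [this, h34]
  · filter_upwards [Filter.eventually_ge_atTop 11] with n hn
    have h4 : (0:ℚ) < 4^n := by positivity
    rw [div_le_iff₀ h4]
    have h34 : ((3:ℚ)/4)^n * 4^n = 3^n := by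
      rw [div_pow]; field_simp
    have := (bound n hn).2
    nlinarith [this, h34]
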